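/- arXiv:0812.0104 — 2 statements merged into one kernel-verified Lean document; each statement's English description precedes it below -/
import Mathlib

section
/- For y₀ ∈ (0,1), θ > 0, and 0 ≤ v ≤ θ, for all t ≥ 0 one has L(t;y₀,θ) - L(t;y₀,θ-v) ≤ (1 - e^{-vt}) · L(t;y₀,θ), where L(t;y₀,θ) = [1+(1/y₀-1)e^{-θt}]^{-1}. -/
/-! Writing `A = (1/y₀ - 1) e^{-θt} ≥ 0` and `e = e^{-vt} ∈ (0, 1]`, one has
`L(t;y₀,θ) = 1/(1 + A)` and `L(t;y₀,θ-v) = 1/(1 + A/e) = e/(e + A) ≥ e/(1 + A)`,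
so slowing the rate by `v` shrinks the logistic curve by at most the factor `e^{-vt}`. -/

lemma mul_inv_one_add_le_inv_one_add_div {A e : ℝ} (hA : 0 ≤ A) (he : 0 < e) (he1 : e ≤ 1) :
    e * (1 + A)⁻¹ ≤ (1 + A / e)⁻¹ := by
  have h_eq : (1 + A / e)⁻¹ = e / (e + A) := by
    rw [one_add_div he.ne', inv_div]
  rw [h_eq, ← div_eq_mul_inv]
  exact div_le_div_of_nonneg_left he.le (by positivity) (by linarith)

theorem logistic_rate_comparison_general (y₀ θ v t : ℝ) (hy : y₀ ∈ Set.Ioo (0:ℝ) 1)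
    (hv0 : 0 ≤ v) (ht : 0 ≤ t)
    (L : ℝ → ℝ → ℝ)
    (hL : ∀ ϑ s, L ϑ s = (1 + (1/y₀ - 1) * Real.exp (-ϑ * s))⁻¹) :
    L θ t - L (θ - v) t ≤ (1 - Real.exp (-v * t)) * L θ t := by
  obtain ⟨hy0, hy1⟩ := hy
  have ha : 0 ≤ 1 / y₀ - 1 := by
    linarith [one_lt_one_div hy0 hy1]
  have he1 : Real.exp (-v * t) ≤ 1 := Real.exp_le_one_iff.2 (by nlinarith)
  have h_exp : Real.exp (-(θ - v) * t) = Real.exp (-θ * t) / Real.exp (-v * t) := by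
    rw [← Real.exp_sub]
    ring_nf
  have key : Real.exp (-v * t) * L θ t ≤ L (θ - v) t := by
    rw [hL, hL, h_exp, ← mul_div_assoc]
    exact mul_inv_one_add_le_inv_one_add_div (mul_nonneg ha (Real.exp_pos _).le)
      (Real.exp_pos _) he1
  linarith

/-- For `y₀ ∈ (0,1)`, `θ > 0`, `0 ≤ v ≤ θ` and `t ≥ 0`:
`L(t;y₀,θ) - L(t;y₀,θ-v) ≤ (1 - e^{-v t}) L(t;y₀,θ)`,
where `L(t;y₀,θ) = (1 + (1/y₀ - 1) e^{-θ t})⁻¹`. -/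
theorem logistic_rate_comparison (y₀ θ v t : ℝ) (hy : y₀ ∈ Set.Ioo (0:ℝ) 1) (hθ : 0 < θ)
    (hv0 : 0 ≤ v) (hvθ : v ≤ θ) (ht : 0 ≤ t)
    (L : ℝ → ℝ → ℝ)
    (hL : ∀ ϑ s, L ϑ s = (1 + (1/y₀ - 1) * Real.exp (-ϑ * s))⁻¹) :
    L θ t - L (θ - v) t ≤ (1 - Real.exp (-v * t)) * L θ t :=
  logistic_rate_comparison_general y₀ θ v t hy hv0 ht L hL
end

section
/- For y₀ ∈ (0,1), θ > 0, and v ≥ 0 with θ - v > 0, for all t ≥ 0 one has L(t;y₀,θ-v) ≥ e^{-vt} · L(t;y₀,θ). -/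
open Real

/- Clearing denominators, `e * (1 + a)⁻¹ ≤ (1 + b)⁻¹` becomes `e + e * b ≤ 1 + a`,
and `e * b = a` reduces this to `e ≤ 1`. -/
lemma mul_inv_one_add_le_inv_one_add {e a b : ℝ} (he : e ≤ 1) (ha : 0 ≤ a) (hb : 0 ≤ b)
    (hab : e * b = a) : e * (1 + a)⁻¹ ≤ (1 + b)⁻¹ := by
  rw [← div_eq_mul_inv, div_le_iff₀ (by positivity), ← hab]
  calc e = (1 + b)⁻¹ * (e * (1 + b)) := by field_simp
    _ ≤ (1 + b)⁻¹ * (1 + e * b) := by gcongr; linarith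

lemma exp_neg_mul_mul_inv_one_add_le {c : ℝ} (hc : 0 ≤ c) (θ : ℝ) {v t : ℝ} (hvt : 0 ≤ v * t) :
    exp (-v * t) * (1 + c * exp (-θ * t))⁻¹ ≤ (1 + c * exp (-(θ - v) * t))⁻¹ := by
  refine mul_inv_one_add_le_inv_one_add (exp_le_one_iff.mpr (by linarith)) (by positivity)
    (by positivity) ?_
  rw [mul_left_comm, ← exp_add]
  ring_nf

theorem logistic_lower_bound_rate_shift_general (y₀ θ v t : ℝ) (hy : y₀ ∈ Set.Ioo (0:ℝ) 1)
    (hv0 : 0 ≤ v) (ht : 0 ≤ t)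
    (L : ℝ → ℝ → ℝ)
    (hL : ∀ ϑ s, L ϑ s = (1 + (1/y₀ - 1) * Real.exp (-ϑ * s))⁻¹) :
    Real.exp (-v * t) * L θ t ≤ L (θ - v) t := by
  have hc : 0 ≤ 1 / y₀ - 1 := sub_nonneg.mpr (one_le_one_div hy.1 hy.2.le)
  rw [hL, hL]
  exact exp_neg_mul_mul_inv_one_add_le hc θ (mul_nonneg hv0 ht)

/-- For `y₀ ∈ (0,1)`, `0 ≤ v < θ` and `t ≥ 0`:
`L(t;y₀,θ-v) ≥ e^{-v t} L(t;y₀,θ)` where `L(t;y₀,θ) = (1 + (1/y₀ - 1) e^{-θ t})⁻¹`. -/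
theorem logistic_lower_bound_rate_shift (y₀ θ v t : ℝ) (hy : y₀ ∈ Set.Ioo (0:ℝ) 1)
    (hθ : 0 < θ) (hv0 : 0 ≤ v) (hvθ : v < θ) (ht : 0 ≤ t)
    (L : ℝ → ℝ → ℝ)
    (hL : ∀ ϑ s, L ϑ s = (1 + (1/y₀ - 1) * Real.exp (-ϑ * s))⁻¹) :
    Real.exp (-v * t) * L θ t ≤ L (θ - v) t :=
  logistic_lower_bound_rate_shift_general y₀ θ v t hy hv0 ht L hL
end
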